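/- Transfer of invariants (corollary): under the openproc assumptions relating np, onp, and sr, for every net_tree n with disjoint addresses, if the open closed network satisfies the open invariant oclosed (opnet onp n) ⊨ ((λ_ _ _. True), other (λ_ _. True) (net_tree_ips n) →) P, then the standard closed network satisfies the invariant closed (pnet np n) ⊨ (λs. P (open state corresponding to s)), where the open state corresponding to s has global component mapping each address i of n to fst (sr (state of node i in s)) (completed outside net_tree_ips n by someinit) and local component the tree of snd (sr ·) values of s. -/

import Mathlib

namespace AWN

/-- AWN sequential process terms. -/
inductive Seqp (S PN L IP MSG DATA : Type) : Type where
  | assign  (l : L) (u : S → S) (p : Seqp S PN L IP MSG DATA)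
  | guard   (l : L) (g : S → Set S) (p : Seqp S PN L IP MSG DATA)
  | ucast   (l : L) (fip : S → IP) (fmsg : S → MSG) (p q : Seqp S PN L IP MSG DATA)
  | bcast   (l : L) (fmsg : S → MSG) (p : Seqp S PN L IP MSG DATA)
  | gcast   (l : L) (fips : S → Set IP) (fmsg : S → MSG) (p : Seqp S PN L IP MSG DATA)
  | send    (l : L) (fmsg : S → MSG) (p : Seqp S PN L IP MSG DATA)
  | deliver (l : L) (fdata : S → DATA) (p : Seqp S PN L IP MSG DATA)
  | receive (l : L) (u : MSG → S → S) (p : Seqp S PN L IP MSG DATA)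
  | choice  (p q : Seqp S PN L IP MSG DATA)
  | call    (pn : PN)

variable {S PN L IP MSG DATA : Type}

def Seqp.isChoice : Seqp S PN L IP MSG DATA → Prop
  | .choice _ _ => True
  | _ => False

def Seqp.isCall : Seqp S PN L IP MSG DATA → Prop
  | .call _ => True
  | _ => False

/-- The microstep relation `p ↝Γ q`. -/
inductive Microstep (Γ : PN → Seqp S PN L IP MSG DATA) :
    Seqp S PN L IP MSG DATA → Seqp S PN L IP MSG DATA → Prop where
  | choice_left  {p q : Seqp S PN L IP MSG DATA} : Microstep Γ (.choice p q) p
  | choice_right {p q : Seqp S PN L IP MSG DATA} : Microstep Γ (.choice p q) q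
  | call {pn : PN} : Microstep Γ (.call pn) (Γ pn)

/-- A specification is wellformed iff the converse of its microstep relation is wellfounded. -/
def Wellformed (Γ : PN → Seqp S PN L IP MSG DATA) : Prop :=
  WellFounded (fun p q => Microstep Γ q p)

/-- `Sterm Γ p q` holds iff `q ∈ sterms Γ p`: `sterms` unfolds choice and call
and is the singleton `{p}` on prefix terms. -/
inductive Sterm (Γ : PN → Seqp S PN L IP MSG DATA) :
    Seqp S PN L IP MSG DATA → Seqp S PN L IP MSG DATA → Prop where
  | prefix {p : Seqp S PN L IP MSG DATA} : ¬ p.isChoice → ¬ p.isCall → Sterm Γ p p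
  | choice_left  {p q r : Seqp S PN L IP MSG DATA} : Sterm Γ p r → Sterm Γ (.choice p q) r
  | choice_right {p q r : Seqp S PN L IP MSG DATA} : Sterm Γ q r → Sterm Γ (.choice p q) r
  | call {pn : PN} {r : Seqp S PN L IP MSG DATA} : Sterm Γ (Γ pn) r → Sterm Γ (.call pn) r

/-- `sterms Γ p` as a set. -/
def sterms (Γ : PN → Seqp S PN L IP MSG DATA) (p : Seqp S PN L IP MSG DATA) :
    Set (Seqp S PN L IP MSG DATA) :=
  {q | Sterm Γ p q}

/-- Local start terms. -/
def stermsl : Seqp S PN L IP MSG DATA → Set (Seqp S PN L IP MSG DATA)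
  | .choice p q => stermsl p ∪ stermsl q
  | p => {p}

/-- Local control terms. -/
def ctermsl : Seqp S PN L IP MSG DATA → Set (Seqp S PN L IP MSG DATA)
  | .assign l u p => insert (.assign l u p) (ctermsl p)
  | .guard l g p => insert (.guard l g p) (ctermsl p)
  | .ucast l fip fmsg p q => insert (.ucast l fip fmsg p q) (ctermsl p ∪ ctermsl q)
  | .bcast l fmsg p => insert (.bcast l fmsg p) (ctermsl p)
  | .gcast l fips fmsg p => insert (.gcast l fips fmsg p) (ctermsl p)
  | .send l fmsg p => insert (.send l fmsg p) (ctermsl p)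
  | .deliver l fdata p => insert (.deliver l fdata p) (ctermsl p)
  | .receive l u p => insert (.receive l u p) (ctermsl p)
  | .choice p q => ctermsl p ∪ ctermsl q
  | .call pn => {.call pn}

/-- `Dterm Γ p q` holds iff `q ∈ dterms Γ p`, the derivative terms of `p`. -/
inductive Dterm (Γ : PN → Seqp S PN L IP MSG DATA) :
    Seqp S PN L IP MSG DATA → Seqp S PN L IP MSG DATA → Prop where
  | choice_left  {p q r : Seqp S PN L IP MSG DATA} : Dterm Γ p r → Dterm Γ (.choice p q) r
  | choice_right {p q r : Seqp S PN L IP MSG DATA} : Dterm Γ q r → Dterm Γ (.choice p q) r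
  | call {pn : PN} {r : Seqp S PN L IP MSG DATA} : Dterm Γ (Γ pn) r → Dterm Γ (.call pn) r
  | assign {l : L} {u : S → S} {p r : Seqp S PN L IP MSG DATA} :
      Sterm Γ p r → Dterm Γ (.assign l u p) r
  | guard {l : L} {g : S → Set S} {p r : Seqp S PN L IP MSG DATA} :
      Sterm Γ p r → Dterm Γ (.guard l g p) r
  | ucast_left {l : L} {fip : S → IP} {fmsg : S → MSG} {p q r : Seqp S PN L IP MSG DATA} :
      Sterm Γ p r → Dterm Γ (.ucast l fip fmsg p q) r
  | ucast_right {l : L} {fip : S → IP} {fmsg : S → MSG} {p q r : Seqp S PN L IP MSG DATA} :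
      Sterm Γ q r → Dterm Γ (.ucast l fip fmsg p q) r
  | bcast {l : L} {fmsg : S → MSG} {p r : Seqp S PN L IP MSG DATA} :
      Sterm Γ p r → Dterm Γ (.bcast l fmsg p) r
  | gcast {l : L} {fips : S → Set IP} {fmsg : S → MSG} {p r : Seqp S PN L IP MSG DATA} :
      Sterm Γ p r → Dterm Γ (.gcast l fips fmsg p) r
  | send {l : L} {fmsg : S → MSG} {p r : Seqp S PN L IP MSG DATA} :
      Sterm Γ p r → Dterm Γ (.send l fmsg p) r
  | deliver {l : L} {fdata : S → DATA} {p r : Seqp S PN L IP MSG DATA} :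
      Sterm Γ p r → Dterm Γ (.deliver l fdata p) r
  | receive {l : L} {u : MSG → S → S} {p r : Seqp S PN L IP MSG DATA} :
      Sterm Γ p r → Dterm Γ (.receive l u p) r

/-- `dterms Γ p` as a set. -/
def dterms (Γ : PN → Seqp S PN L IP MSG DATA) (p : Seqp S PN L IP MSG DATA) :
    Set (Seqp S PN L IP MSG DATA) :=
  {q | Dterm Γ p q}

/-- `Cterm Γ p` holds iff `p ∈ cterms Γ`, the smallest set containing all
`sterms Γ (Γ pn)` and closed under `dterms`. -/
inductive Cterm (Γ : PN → Seqp S PN L IP MSG DATA) : Seqp S PN L IP MSG DATA → Prop where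
  | sterm {pn : PN} {p : Seqp S PN L IP MSG DATA} : Sterm Γ (Γ pn) p → Cterm Γ p
  | dterm {p q : Seqp S PN L IP MSG DATA} : Cterm Γ p → Dterm Γ p q → Cterm Γ q

/-- `cterms Γ` as a set. -/
def cterms (Γ : PN → Seqp S PN L IP MSG DATA) : Set (Seqp S PN L IP MSG DATA) :=
  {p | Cterm Γ p}

/-- Subterms of a sequential process term. -/
def subterms : Seqp S PN L IP MSG DATA → Set (Seqp S PN L IP MSG DATA)
  | .assign l u p => insert (.assign l u p) (subterms p)
  | .guard l g p => insert (.guard l g p) (subterms p)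
  | .ucast l fip fmsg p q => insert (.ucast l fip fmsg p q) (subterms p ∪ subterms q)
  | .bcast l fmsg p => insert (.bcast l fmsg p) (subterms p)
  | .gcast l fips fmsg p => insert (.gcast l fips fmsg p) (subterms p)
  | .send l fmsg p => insert (.send l fmsg p) (subterms p)
  | .deliver l fdata p => insert (.deliver l fdata p) (subterms p)
  | .receive l u p => insert (.receive l u p) (subterms p)
  | .choice p q => insert (.choice p q) (subterms p ∪ subterms q)
  | .call pn => {.call pn}



/-- Actions of sequential AWN processes. -/
inductive SeqAction (IP MSG DATA : Type) : Type where
  | broadcast  (m : MSG)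
  | groupcast  (ips : Set IP) (m : MSG)
  | unicast    (i : IP) (m : MSG)
  | notunicast (i : IP)
  | send       (m : MSG)
  | deliver    (d : DATA)
  | receive    (m : MSG)
  | tau

variable {S PN L IP MSG DATA : Type}

def SeqAction.isReceive : SeqAction IP MSG DATA → Prop
  | .receive _ => True
  | _ => False

def SeqAction.isSend : SeqAction IP MSG DATA → Prop
  | .send _ => True
  | _ => False

/-- The SOS rules of sequential AWN processes. -/
inductive SeqpSos (Γ : PN → Seqp S PN L IP MSG DATA) :
    S × Seqp S PN L IP MSG DATA → SeqAction IP MSG DATA → S × Seqp S PN L IP MSG DATA → Prop where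
  | assign {ξ : S} {l : L} {u : S → S} {p : Seqp S PN L IP MSG DATA} :
      SeqpSos Γ (ξ, .assign l u p) .tau (u ξ, p)
  | guard {ξ ξ' : S} {l : L} {g : S → Set S} {p : Seqp S PN L IP MSG DATA} :
      ξ' ∈ g ξ → SeqpSos Γ (ξ, .guard l g p) .tau (ξ', p)
  | ucast {ξ : S} {l : L} {fip : S → IP} {fmsg : S → MSG} {p q : Seqp S PN L IP MSG DATA} :
      SeqpSos Γ (ξ, .ucast l fip fmsg p q) (.unicast (fip ξ) (fmsg ξ)) (ξ, p)
  | notucast {ξ : S} {l : L} {fip : S → IP} {fmsg : S → MSG} {p q : Seqp S PN L IP MSG DATA} :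
      SeqpSos Γ (ξ, .ucast l fip fmsg p q) (.notunicast (fip ξ)) (ξ, q)
  | bcast {ξ : S} {l : L} {fmsg : S → MSG} {p : Seqp S PN L IP MSG DATA} :
      SeqpSos Γ (ξ, .bcast l fmsg p) (.broadcast (fmsg ξ)) (ξ, p)
  | gcast {ξ : S} {l : L} {fips : S → Set IP} {fmsg : S → MSG} {p : Seqp S PN L IP MSG DATA} :
      SeqpSos Γ (ξ, .gcast l fips fmsg p) (.groupcast (fips ξ) (fmsg ξ)) (ξ, p)
  | send {ξ : S} {l : L} {fmsg : S → MSG} {p : Seqp S PN L IP MSG DATA} :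
      SeqpSos Γ (ξ, .send l fmsg p) (.send (fmsg ξ)) (ξ, p)
  | deliver {ξ : S} {l : L} {fdata : S → DATA} {p : Seqp S PN L IP MSG DATA} :
      SeqpSos Γ (ξ, .deliver l fdata p) (.deliver (fdata ξ)) (ξ, p)
  | receive {ξ : S} {l : L} {u : MSG → S → S} {p : Seqp S PN L IP MSG DATA} (m : MSG) :
      SeqpSos Γ (ξ, .receive l u p) (.receive m) (u m ξ, p)
  | choice_left {ξ ξ' : S} {p q p' : Seqp S PN L IP MSG DATA} {a : SeqAction IP MSG DATA} :
      SeqpSos Γ (ξ, p) a (ξ', p') → SeqpSos Γ (ξ, .choice p q) a (ξ', p')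
  | choice_right {ξ ξ' : S} {p q p' : Seqp S PN L IP MSG DATA} {a : SeqAction IP MSG DATA} :
      SeqpSos Γ (ξ, q) a (ξ', p') → SeqpSos Γ (ξ, .choice p q) a (ξ', p')
  | call {ξ ξ' : S} {pn : PN} {p' : Seqp S PN L IP MSG DATA} {a : SeqAction IP MSG DATA} :
      SeqpSos Γ (ξ, Γ pn) a (ξ', p') → SeqpSos Γ (ξ, .call pn) a (ξ', p')

/-- An automaton: a set of initial states and a transition relation. -/
structure Automaton (σ α : Type) : Type where
  init : Set σ
  trans : σ → α → σ → Prop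

/-- Reachability under an assumption `I` on actions. -/
inductive Reachable {σ α : Type} (A : Automaton σ α) (I : α → Prop) : σ → Prop where
  | init {s : σ} : s ∈ A.init → Reachable A I s
  | step {s s' : σ} {a : α} : Reachable A I s → A.trans s a s' → I a → Reachable A I s'

/-- Invariance: `A ⊨ (I →) P`. -/
def Invariant {σ α : Type} (A : Automaton σ α) (I : α → Prop) (P : σ → Prop) : Prop :=
  ∀ s, Reachable A I s → P s

/-- Step invariance: `A ⊨A (I →) Q`. -/
def StepInvariant {σ α : Type} (A : Automaton σ α) (I : α → Prop) (Q : σ → α → σ → Prop) : Prop :=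
  ∀ s a s', Reachable A I s → A.trans s a s' → I a → Q s a s'

/-- The label(s) decorating the top-most constructor of a term. -/
def topLabels : Seqp S PN L IP MSG DATA → Set L
  | .assign l _ _ => {l}
  | .guard l _ _ => {l}
  | .ucast l _ _ _ _ => {l}
  | .bcast l _ _ => {l}
  | .gcast l _ _ _ => {l}
  | .send l _ _ => {l}
  | .deliver l _ _ => {l}
  | .receive l _ _ => {l}
  | .choice _ _ => ∅
  | .call _ => ∅

/-- The labels of the start terms of `p`. -/
def labels (Γ : PN → Seqp S PN L IP MSG DATA) (p : Seqp S PN L IP MSG DATA) : Set L :=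
  {l | ∃ q, Sterm Γ p q ∧ l ∈ topLabels q}

/-- `onl Γ P` holds of `(ξ, p)` iff `P (ξ, l)` for every label `l` of `p`. -/
def onl {X : Type} (Γ : PN → Seqp S PN L IP MSG DATA) (P : X × L → Prop)
    (s : X × Seqp S PN L IP MSG DATA) : Prop :=
  ∀ l ∈ labels Γ s.2, P (s.1, l)

/-- All control terms of initial states stem from the specification. -/
def ControlWithin {X : Type} (Γ : PN → Seqp S PN L IP MSG DATA)
    (I : Set (X × Seqp S PN L IP MSG DATA)) : Prop :=
  ∀ s ∈ I, ∃ pn, s.2 ∈ subterms (Γ pn)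

/-- Every subterm of the specification has exactly one label. -/
def SimpleLabels (Γ : PN → Seqp S PN L IP MSG DATA) : Prop :=
  ∀ pn p, p ∈ subterms (Γ pn) → ∃ l, labels Γ p = {l}



/-- Open SOS rules for sequential processes: the state pairs a global state
`σ : IP → S` with a control term, and the rules constrain only entry `i`. -/
inductive OseqpSos (Γ : PN → Seqp S PN L IP MSG DATA) (i : IP) :
    (IP → S) × Seqp S PN L IP MSG DATA → SeqAction IP MSG DATA →
    (IP → S) × Seqp S PN L IP MSG DATA → Prop where
  | assign {σ σ' : IP → S} {l : L} {u : S → S} {p : Seqp S PN L IP MSG DATA} :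
      σ' i = u (σ i) → OseqpSos Γ i (σ, .assign l u p) .tau (σ', p)
  | guard {σ σ' : IP → S} {l : L} {g : S → Set S} {p : Seqp S PN L IP MSG DATA} :
      σ' i ∈ g (σ i) → OseqpSos Γ i (σ, .guard l g p) .tau (σ', p)
  | ucast {σ σ' : IP → S} {l : L} {fip : S → IP} {fmsg : S → MSG}
      {p q : Seqp S PN L IP MSG DATA} :
      σ' i = σ i →
      OseqpSos Γ i (σ, .ucast l fip fmsg p q) (.unicast (fip (σ i)) (fmsg (σ i))) (σ', p)
  | notucast {σ σ' : IP → S} {l : L} {fip : S → IP} {fmsg : S → MSG}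
      {p q : Seqp S PN L IP MSG DATA} :
      σ' i = σ i →
      OseqpSos Γ i (σ, .ucast l fip fmsg p q) (.notunicast (fip (σ i))) (σ', q)
  | bcast {σ σ' : IP → S} {l : L} {fmsg : S → MSG} {p : Seqp S PN L IP MSG DATA} :
      σ' i = σ i → OseqpSos Γ i (σ, .bcast l fmsg p) (.broadcast (fmsg (σ i))) (σ', p)
  | gcast {σ σ' : IP → S} {l : L} {fips : S → Set IP} {fmsg : S → MSG}
      {p : Seqp S PN L IP MSG DATA} :
      σ' i = σ i →
      OseqpSos Γ i (σ, .gcast l fips fmsg p) (.groupcast (fips (σ i)) (fmsg (σ i))) (σ', p)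
  | send {σ σ' : IP → S} {l : L} {fmsg : S → MSG} {p : Seqp S PN L IP MSG DATA} :
      σ' i = σ i → OseqpSos Γ i (σ, .send l fmsg p) (.send (fmsg (σ i))) (σ', p)
  | deliver {σ σ' : IP → S} {l : L} {fdata : S → DATA} {p : Seqp S PN L IP MSG DATA} :
      σ' i = σ i → OseqpSos Γ i (σ, .deliver l fdata p) (.deliver (fdata (σ i))) (σ', p)
  | receive {σ σ' : IP → S} {l : L} {u : MSG → S → S} {p : Seqp S PN L IP MSG DATA} (m : MSG) :
      σ' i = u m (σ i) → OseqpSos Γ i (σ, .receive l u p) (.receive m) (σ', p)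
  | choice_left {σ σ' : IP → S} {p q p' : Seqp S PN L IP MSG DATA} {a : SeqAction IP MSG DATA} :
      OseqpSos Γ i (σ, p) a (σ', p') → OseqpSos Γ i (σ, .choice p q) a (σ', p')
  | choice_right {σ σ' : IP → S} {p q p' : Seqp S PN L IP MSG DATA} {a : SeqAction IP MSG DATA} :
      OseqpSos Γ i (σ, q) a (σ', p') → OseqpSos Γ i (σ, .choice p q) a (σ', p')
  | call {σ σ' : IP → S} {pn : PN} {p' : Seqp S PN L IP MSG DATA} {a : SeqAction IP MSG DATA} :
      OseqpSos Γ i (σ, Γ pn) a (σ', p') → OseqpSos Γ i (σ, .call pn) a (σ', p')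

/-- Open reachability: `S` constrains synchronized steps, `U` interleaved environment steps. -/
inductive Oreachable {G LS α : Type} (A : Automaton (G × LS) α)
    (S : G → G → α → Prop) (U : G → G → Prop) : G × LS → Prop where
  | init {s : G × LS} : s ∈ A.init → Oreachable A S U s
  | other {σ σ' : G} {ζ : LS} :
      Oreachable A S U (σ, ζ) → U σ σ' → Oreachable A S U (σ', ζ)
  | step {σ σ' : G} {ζ ζ' : LS} {a : α} :
      Oreachable A S U (σ, ζ) → A.trans (σ, ζ) a (σ', ζ') → S σ σ' a →
      Oreachable A S U (σ', ζ')

/-- Open invariance: `A ⊨ (S, U →) P`. -/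
def Oinvariant {G LS α : Type} (A : Automaton (G × LS) α)
    (S : G → G → α → Prop) (U : G → G → Prop) (P : G × LS → Prop) : Prop :=
  ∀ s, Oreachable A S U s → P s

/-- Open step invariance: `A ⊨A (S, U →) Q`. -/
def OstepInvariant {G LS α : Type} (A : Automaton (G × LS) α)
    (S : G → G → α → Prop) (U : G → G → Prop) (Q : (G × LS) → α → (G × LS) → Prop) : Prop :=
  ∀ s a s', Oreachable A S U s → A.trans s a s' → S s.1 s'.1 a → Q s a s'

def otherwith {α : Type} (E : S → S → Prop) (N : Set IP) (I : (IP → S) → α → Prop)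
    (σ σ' : IP → S) (a : α) : Prop :=
  (∀ j ∉ N, E (σ j) (σ' j)) ∧ I σ a

def other (F : S → S → Prop) (N : Set IP) (σ σ' : IP → S) : Prop :=
  (∀ j ∈ N, σ' j = σ j) ∧ (∀ j ∉ N, F (σ j) (σ' j))

def orecvmsg (R : (IP → S) → MSG → Prop) (σ : IP → S) : SeqAction IP MSG DATA → Prop :=
  fun a => ∀ m, a = .receive m → R σ m



/-- Actions at the node and network level. -/
inductive NodeAction (IP MSG DATA : Type) : Type where
  | cast       (R : Set IP) (m : MSG)              -- R:*cast(m)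
  | arrive     (H K : Set IP) (m : MSG)            -- H¬K:arrive(m)
  | deliver    (i : IP) (d : DATA)
  | connect    (i i' : IP)
  | disconnect (i i' : IP)
  | tau

/-- The local (non-synchronizing) node actions. -/
def NodeAction.isLocal : NodeAction IP MSG DATA → Prop
  | .tau => True
  | .deliver _ _ => True
  | _ => False

/-- States of (partial) networks: a tree of node states `s_R`. -/
inductive NetState (PS IP : Type) : Type where
  | node   (i : IP) (s : PS) (R : Set IP)
  | subnet (s t : NetState PS IP)

/-- The addresses occurring in a network state. -/
def netIps {PS : Type} : NetState PS IP → Set IP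
  | .node i _ _ => {i}
  | .subnet s t => netIps s ∪ netIps t

/-- Standard node SOS rules, wrapping a process automaton at address `i`. -/
inductive NodeSos {PS : Type} (A : Automaton PS (SeqAction IP MSG DATA)) (i : IP) :
    NetState PS IP → NodeAction IP MSG DATA → NetState PS IP → Prop where
  | bcast {s s' : PS} {R : Set IP} {m : MSG} :
      A.trans s (.broadcast m) s' → NodeSos A i (.node i s R) (.cast R m) (.node i s' R)
  | gcast {s s' : PS} {R D : Set IP} {m : MSG} :
      A.trans s (.groupcast D m) s' → NodeSos A i (.node i s R) (.cast (R ∩ D) m) (.node i s' R)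
  | ucast {s s' : PS} {R : Set IP} {d : IP} {m : MSG} :
      d ∈ R → A.trans s (.unicast d m) s' →
      NodeSos A i (.node i s R) (.cast {d} m) (.node i s' R)
  | notucast {s s' : PS} {R : Set IP} {d : IP} :
      d ∉ R → A.trans s (.notunicast d) s' → NodeSos A i (.node i s R) .tau (.node i s' R)
  | deliver {s s' : PS} {R : Set IP} {d : DATA} :
      A.trans s (.deliver d) s' → NodeSos A i (.node i s R) (.deliver i d) (.node i s' R)
  | tau {s s' : PS} {R : Set IP} :
      A.trans s .tau s' → NodeSos A i (.node i s R) .tau (.node i s' R)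
  | receive {s s' : PS} {R : Set IP} {m : MSG} :
      A.trans s (.receive m) s' →
      NodeSos A i (.node i s R) (.arrive {i} ∅ m) (.node i s' R)
  | not_arrive {s : PS} {R : Set IP} {m : MSG} :
      NodeSos A i (.node i s R) (.arrive ∅ {i} m) (.node i s R)
  | connect_this {s : PS} {R : Set IP} {i' : IP} :
      NodeSos A i (.node i s R) (.connect i i') (.node i s (R ∪ {i'}))
  | connect_that {s : PS} {R : Set IP} {i' : IP} :
      NodeSos A i (.node i s R) (.connect i' i) (.node i s (R ∪ {i'}))
  | connect_other {s : PS} {R : Set IP} {i' i'' : IP} :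
      i ≠ i' → i ≠ i'' →
      NodeSos A i (.node i s R) (.connect i' i'') (.node i s R)
  | disconnect_this {s : PS} {R : Set IP} {i' : IP} :
      NodeSos A i (.node i s R) (.disconnect i i') (.node i s (R \ {i'}))
  | disconnect_that {s : PS} {R : Set IP} {i' : IP} :
      NodeSos A i (.node i s R) (.disconnect i' i) (.node i s (R \ {i'}))
  | disconnect_other {s : PS} {R : Set IP} {i' i'' : IP} :
      i ≠ i' → i ≠ i'' →
      NodeSos A i (.node i s R) (.disconnect i' i'') (.node i s R)

/-- The node expression `⟨i : A : R₀⟩`. -/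
def node {PS : Type} (i : IP) (A : Automaton PS (SeqAction IP MSG DATA)) (R₀ : Set IP) :
    Automaton (NetState PS IP) (NodeAction IP MSG DATA) :=
  ⟨{x | ∃ s ∈ A.init, x = .node i s R₀}, NodeSos A i⟩

/-- Open node SOS rules, over a global state `σ : IP → S`. -/
inductive OnodeSos {PS : Type} (A : Automaton ((IP → S) × PS) (SeqAction IP MSG DATA)) (i : IP) :
    (IP → S) × NetState PS IP → NodeAction IP MSG DATA → (IP → S) × NetState PS IP → Prop where
  | bcast {σ σ' : IP → S} {s s' : PS} {R : Set IP} {m : MSG} :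
      A.trans (σ, s) (.broadcast m) (σ', s') →
      OnodeSos A i (σ, .node i s R) (.cast R m) (σ', .node i s' R)
  | gcast {σ σ' : IP → S} {s s' : PS} {R D : Set IP} {m : MSG} :
      A.trans (σ, s) (.groupcast D m) (σ', s') →
      OnodeSos A i (σ, .node i s R) (.cast (R ∩ D) m) (σ', .node i s' R)
  | ucast {σ σ' : IP → S} {s s' : PS} {R : Set IP} {d : IP} {m : MSG} :
      d ∈ R → A.trans (σ, s) (.unicast d m) (σ', s') →
      OnodeSos A i (σ, .node i s R) (.cast {d} m) (σ', .node i s' R)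
  | notucast {σ σ' : IP → S} {s s' : PS} {R : Set IP} {d : IP} :
      d ∉ R → A.trans (σ, s) (.notunicast d) (σ', s') → (∀ j, j ≠ i → σ' j = σ j) →
      OnodeSos A i (σ, .node i s R) .tau (σ', .node i s' R)
  | deliver {σ σ' : IP → S} {s s' : PS} {R : Set IP} {d : DATA} :
      A.trans (σ, s) (.deliver d) (σ', s') → (∀ j, j ≠ i → σ' j = σ j) →
      OnodeSos A i (σ, .node i s R) (.deliver i d) (σ', .node i s' R)
  | tau {σ σ' : IP → S} {s s' : PS} {R : Set IP} :
      A.trans (σ, s) .tau (σ', s') → (∀ j, j ≠ i → σ' j = σ j) →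
      OnodeSos A i (σ, .node i s R) .tau (σ', .node i s' R)
  | receive {σ σ' : IP → S} {s s' : PS} {R : Set IP} {m : MSG} :
      A.trans (σ, s) (.receive m) (σ', s') →
      OnodeSos A i (σ, .node i s R) (.arrive {i} ∅ m) (σ', .node i s' R)
  | not_arrive {σ σ' : IP → S} {s : PS} {R : Set IP} {m : MSG} :
      σ' i = σ i →
      OnodeSos A i (σ, .node i s R) (.arrive ∅ {i} m) (σ', .node i s R)
  | connect_this {σ σ' : IP → S} {s : PS} {R : Set IP} {i' : IP} :
      σ' i = σ i →
      OnodeSos A i (σ, .node i s R) (.connect i i') (σ', .node i s (R ∪ {i'}))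
  | connect_that {σ σ' : IP → S} {s : PS} {R : Set IP} {i' : IP} :
      σ' i = σ i →
      OnodeSos A i (σ, .node i s R) (.connect i' i) (σ', .node i s (R ∪ {i'}))
  | connect_other {σ σ' : IP → S} {s : PS} {R : Set IP} {i' i'' : IP} :
      i ≠ i' → i ≠ i'' → σ' i = σ i →
      OnodeSos A i (σ, .node i s R) (.connect i' i'') (σ', .node i s R)
  | disconnect_this {σ σ' : IP → S} {s : PS} {R : Set IP} {i' : IP} :
      σ' i = σ i →
      OnodeSos A i (σ, .node i s R) (.disconnect i i') (σ', .node i s (R \ {i'}))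
  | disconnect_that {σ σ' : IP → S} {s : PS} {R : Set IP} {i' : IP} :
      σ' i = σ i →
      OnodeSos A i (σ, .node i s R) (.disconnect i' i) (σ', .node i s (R \ {i'}))
  | disconnect_other {σ σ' : IP → S} {s : PS} {R : Set IP} {i' i'' : IP} :
      i ≠ i' → i ≠ i'' → σ' i = σ i →
      OnodeSos A i (σ, .node i s R) (.disconnect i' i'') (σ', .node i s R)

/-- The open node expression `⟨i : A : R₀⟩ₒ`. -/
def onode {PS : Type} (i : IP) (A : Automaton ((IP → S) × PS) (SeqAction IP MSG DATA))
    (R₀ : Set IP) : Automaton ((IP → S) × NetState PS IP) (NodeAction IP MSG DATA) :=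
  ⟨{x | ∃ σ s, (σ, s) ∈ A.init ∧ x = (σ, .node i s R₀)}, OnodeSos A i⟩

def oarrivemsg (I : (IP → S) → MSG → Prop) (σ : IP → S) : NodeAction IP MSG DATA → Prop :=
  fun a => ∀ H K m, a = .arrive H K m → I σ m



/-! ### Message queues and local parallel composition -/

/-- Transitions of the message queue `qmsg`. -/
inductive QmsgSos : List MSG → SeqAction IP MSG DATA → List MSG → Prop where
  | receive (q : List MSG) (m : MSG) : QmsgSos q (.receive m) (q ++ [m])
  | send (m : MSG) (q : List MSG) : QmsgSos (m :: q) (.send m) q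

/-- The message queue automaton. -/
def qmsg : Automaton (List MSG) (SeqAction IP MSG DATA) :=
  ⟨{[]}, QmsgSos⟩

/-- Standard local parallel composition: receives of `A` synchronize
with sends of `B`, becoming `τ`. -/
inductive ParSos {PS QS : Type} (TA : PS → SeqAction IP MSG DATA → PS → Prop)
    (TB : QS → SeqAction IP MSG DATA → QS → Prop) :
    PS × QS → SeqAction IP MSG DATA → PS × QS → Prop where
  | left {s s' : PS} {q : QS} {a : SeqAction IP MSG DATA} :
      TA s a s' → ¬ a.isReceive → ParSos TA TB (s, q) a (s', q)
  | right {s : PS} {q q' : QS} {a : SeqAction IP MSG DATA} :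
      TB q a q' → ¬ a.isSend → ParSos TA TB (s, q) a (s, q')
  | comm {s s' : PS} {q q' : QS} {m : MSG} :
      TA s (.receive m) s' → TB q (.send m) q' → ParSos TA TB (s, q) .tau (s', q')

/-- `A ⟨⟨ B`. -/
def par {PS QS : Type} (A : Automaton PS (SeqAction IP MSG DATA))
    (B : Automaton QS (SeqAction IP MSG DATA)) :
    Automaton (PS × QS) (SeqAction IP MSG DATA) :=
  ⟨{x | x.1 ∈ A.init ∧ x.2 ∈ B.init}, ParSos A.trans B.trans⟩

/-- Open local parallel composition with a (closed) automaton `B` on the right: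
only the left component constrains the global state. -/
inductive OparSos {G PS QS : Type} (TA : G × PS → SeqAction IP MSG DATA → G × PS → Prop)
    (TB : QS → SeqAction IP MSG DATA → QS → Prop) :
    G × (PS × QS) → SeqAction IP MSG DATA → G × (PS × QS) → Prop where
  | left {σ σ' : G} {s s' : PS} {q : QS} {a : SeqAction IP MSG DATA} :
      TA (σ, s) a (σ', s') → ¬ a.isReceive → OparSos TA TB (σ, (s, q)) a (σ', (s', q))
  | right {σ : G} {s : PS} {q q' : QS} {a : SeqAction IP MSG DATA} :
      TB q a q' → ¬ a.isSend → OparSos TA TB (σ, (s, q)) a (σ, (s, q'))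
  | comm {σ σ' : G} {s s' : PS} {q q' : QS} {m : MSG} :
      TA (σ, s) (.receive m) (σ', s') → TB q (.send m) q' →
      OparSos TA TB (σ, (s, q)) .tau (σ', (s', q'))

/-- `A ⟨⟨ᵢ qmsg`: the open parallel composition of `A` with the message queue. -/
def oparQmsg {G PS : Type} (A : Automaton (G × PS) (SeqAction IP MSG DATA)) :
    Automaton (G × (PS × List MSG)) (SeqAction IP MSG DATA) :=
  ⟨{x | (x.1, x.2.1) ∈ A.init ∧ x.2.2 = []}, OparSos A.trans (qmsg (IP := IP) (DATA := DATA)).trans⟩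

/-! ### Network trees and partial networks -/

/-- Network structure terms. -/
inductive NetTree (IP : Type) : Type where
  | node (i : IP) (R : Set IP)
  | par (t₁ t₂ : NetTree IP)

/-- The addresses of a network tree. -/
def netTreeIps : NetTree IP → Set IP
  | .node i _ => {i}
  | .par t₁ t₂ => netTreeIps t₁ ∪ netTreeIps t₂

/-- Disjointness of the addresses of a network tree. -/
def WfNetTree : NetTree IP → Prop
  | .node _ _ => True
  | .par t₁ t₂ => netTreeIps t₁ ∩ netTreeIps t₂ = ∅ ∧ WfNetTree t₁ ∧ WfNetTree t₂

/-- Standard SOS rules for (partial) networks. -/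
inductive PnetSos {PS : Type}
    (T₁ T₂ : NetState PS IP → NodeAction IP MSG DATA → NetState PS IP → Prop) :
    NetState PS IP → NodeAction IP MSG DATA → NetState PS IP → Prop where
  | cast_left {s s' t t' : NetState PS IP} {R H K : Set IP} {m : MSG} :
      T₁ s (.cast R m) s' → T₂ t (.arrive H K m) t' → H ⊆ R → K ∩ R = ∅ →
      PnetSos T₁ T₂ (.subnet s t) (.cast R m) (.subnet s' t')
  | cast_right {s s' t t' : NetState PS IP} {R H K : Set IP} {m : MSG} :
      T₁ s (.arrive H K m) s' → T₂ t (.cast R m) t' → H ⊆ R → K ∩ R = ∅ →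
      PnetSos T₁ T₂ (.subnet s t) (.cast R m) (.subnet s' t')
  | arrive {s s' t t' : NetState PS IP} {H₁ K₁ H₂ K₂ : Set IP} {m : MSG} :
      T₁ s (.arrive H₁ K₁ m) s' → T₂ t (.arrive H₂ K₂ m) t' →
      PnetSos T₁ T₂ (.subnet s t) (.arrive (H₁ ∪ H₂) (K₁ ∪ K₂) m) (.subnet s' t')
  | tau_left {s s' t : NetState PS IP} :
      T₁ s .tau s' → PnetSos T₁ T₂ (.subnet s t) .tau (.subnet s' t)
  | tau_right {s t t' : NetState PS IP} :
      T₂ t .tau t' → PnetSos T₁ T₂ (.subnet s t) .tau (.subnet s t')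
  | deliver_left {s s' t : NetState PS IP} {i : IP} {d : DATA} :
      T₁ s (.deliver i d) s' → PnetSos T₁ T₂ (.subnet s t) (.deliver i d) (.subnet s' t)
  | deliver_right {s t t' : NetState PS IP} {i : IP} {d : DATA} :
      T₂ t (.deliver i d) t' → PnetSos T₁ T₂ (.subnet s t) (.deliver i d) (.subnet s t')
  | connect {s s' t t' : NetState PS IP} {i i' : IP} :
      T₁ s (.connect i i') s' → T₂ t (.connect i i') t' →
      PnetSos T₁ T₂ (.subnet s t) (.connect i i') (.subnet s' t')
  | disconnect {s s' t t' : NetState PS IP} {i i' : IP} :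
      T₁ s (.disconnect i i') s' → T₂ t (.disconnect i i') t' →
      PnetSos T₁ T₂ (.subnet s t) (.disconnect i i') (.subnet s' t')

/-- The standard network automaton of a network tree. -/
def pnet {PS : Type} (np : IP → Automaton PS (SeqAction IP MSG DATA)) :
    NetTree IP → Automaton (NetState PS IP) (NodeAction IP MSG DATA)
  | .node i R => node i (np i) R
  | .par t₁ t₂ =>
      ⟨{x | ∃ s t, s ∈ (pnet np t₁).init ∧ t ∈ (pnet np t₂).init ∧ x = .subnet s t},
       PnetSos (pnet np t₁).trans (pnet np t₂).trans⟩

/-- Open SOS rules for (partial) networks. -/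
inductive OpnetSos {PS : Type}
    (T₁ T₂ : (IP → S) × NetState PS IP → NodeAction IP MSG DATA →
             (IP → S) × NetState PS IP → Prop) :
    (IP → S) × NetState PS IP → NodeAction IP MSG DATA → (IP → S) × NetState PS IP → Prop where
  | cast_left {σ σ' : IP → S} {s s' t t' : NetState PS IP} {R H K : Set IP} {m : MSG} :
      T₁ (σ, s) (.cast R m) (σ', s') → T₂ (σ, t) (.arrive H K m) (σ', t') →
      H ⊆ R → K ∩ R = ∅ →
      OpnetSos T₁ T₂ (σ, .subnet s t) (.cast R m) (σ', .subnet s' t')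
  | cast_right {σ σ' : IP → S} {s s' t t' : NetState PS IP} {R H K : Set IP} {m : MSG} :
      T₁ (σ, s) (.arrive H K m) (σ', s') → T₂ (σ, t) (.cast R m) (σ', t') →
      H ⊆ R → K ∩ R = ∅ →
      OpnetSos T₁ T₂ (σ, .subnet s t) (.cast R m) (σ', .subnet s' t')
  | arrive {σ σ' : IP → S} {s s' t t' : NetState PS IP} {H₁ K₁ H₂ K₂ : Set IP} {m : MSG} :
      T₁ (σ, s) (.arrive H₁ K₁ m) (σ', s') → T₂ (σ, t) (.arrive H₂ K₂ m) (σ', t') →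
      OpnetSos T₁ T₂ (σ, .subnet s t) (.arrive (H₁ ∪ H₂) (K₁ ∪ K₂) m) (σ', .subnet s' t')
  | tau_left {σ σ' : IP → S} {s s' t : NetState PS IP} :
      T₁ (σ, s) .tau (σ', s') → (∀ j ∈ netIps t, σ' j = σ j) →
      OpnetSos T₁ T₂ (σ, .subnet s t) .tau (σ', .subnet s' t)
  | tau_right {σ σ' : IP → S} {s t t' : NetState PS IP} :
      T₂ (σ, t) .tau (σ', t') → (∀ j ∈ netIps s, σ' j = σ j) →
      OpnetSos T₁ T₂ (σ, .subnet s t) .tau (σ', .subnet s t')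
  | deliver_left {σ σ' : IP → S} {s s' t : NetState PS IP} {i : IP} {d : DATA} :
      T₁ (σ, s) (.deliver i d) (σ', s') → (∀ j ∈ netIps t, σ' j = σ j) →
      OpnetSos T₁ T₂ (σ, .subnet s t) (.deliver i d) (σ', .subnet s' t)
  | deliver_right {σ σ' : IP → S} {s t t' : NetState PS IP} {i : IP} {d : DATA} :
      T₂ (σ, t) (.deliver i d) (σ', t') → (∀ j ∈ netIps s, σ' j = σ j) →
      OpnetSos T₁ T₂ (σ, .subnet s t) (.deliver i d) (σ', .subnet s t')
  | connect {σ σ' : IP → S} {s s' t t' : NetState PS IP} {i i' : IP} :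
      T₁ (σ, s) (.connect i i') (σ', s') → T₂ (σ, t) (.connect i i') (σ', t') →
      OpnetSos T₁ T₂ (σ, .subnet s t) (.connect i i') (σ', .subnet s' t')
  | disconnect {σ σ' : IP → S} {s s' t t' : NetState PS IP} {i i' : IP} :
      T₁ (σ, s) (.disconnect i i') (σ', s') → T₂ (σ, t) (.disconnect i i') (σ', t') →
      OpnetSos T₁ T₂ (σ, .subnet s t) (.disconnect i i') (σ', .subnet s' t')

/-- The open network automaton of a network tree. -/
def opnet {PS : Type} (onp : IP → Automaton ((IP → S) × PS) (SeqAction IP MSG DATA)) :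
    NetTree IP → Automaton ((IP → S) × NetState PS IP) (NodeAction IP MSG DATA)
  | .node i R => onode i (onp i) R
  | .par t₁ t₂ =>
      ⟨{x | ∃ σ s t, (σ, s) ∈ (opnet onp t₁).init ∧ (σ, t) ∈ (opnet onp t₂).init ∧
            x = (σ, .subnet s t)},
       OpnetSos (opnet onp t₁).trans (opnet onp t₂).trans⟩

/-! ### Closed networks -/

/-- SOS rules closing a network: `*cast` becomes `τ`, `arrive` is forbidden. -/
inductive CnetSos {NS : Type} (T : NS → NodeAction IP MSG DATA → NS → Prop) :
    NS → NodeAction IP MSG DATA → NS → Prop where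
  | cast {s s' : NS} {R : Set IP} {m : MSG} : T s (.cast R m) s' → CnetSos T s .tau s'
  | tau {s s' : NS} : T s .tau s' → CnetSos T s .tau s'
  | deliver {s s' : NS} {i : IP} {d : DATA} :
      T s (.deliver i d) s' → CnetSos T s (.deliver i d) s'
  | connect {s s' : NS} {i i' : IP} :
      T s (.connect i i') s' → CnetSos T s (.connect i i') s'
  | disconnect {s s' : NS} {i i' : IP} :
      T s (.disconnect i i') s' → CnetSos T s (.disconnect i i') s'

/-- The closed network automaton. -/
def closed {NS : Type} (A : Automaton NS (NodeAction IP MSG DATA)) :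
    Automaton NS (NodeAction IP MSG DATA) :=
  ⟨A.init, CnetSos A.trans⟩

/-- Open SOS rules closing a network: additionally, global entries not
addressed within the network may not change. -/
inductive OcnetSos {LS : Type}
    (T : (IP → S) × NetState LS IP → NodeAction IP MSG DATA →
         (IP → S) × NetState LS IP → Prop) :
    (IP → S) × NetState LS IP → NodeAction IP MSG DATA → (IP → S) × NetState LS IP → Prop where
  | cast {σ σ' : IP → S} {s s' : NetState LS IP} {R : Set IP} {m : MSG} :
      (∀ j ∉ netIps s, σ' j = σ j) → T (σ, s) (.cast R m) (σ', s') →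
      OcnetSos T (σ, s) .tau (σ', s')
  | tau {σ σ' : IP → S} {s s' : NetState LS IP} :
      (∀ j ∉ netIps s, σ' j = σ j) → T (σ, s) .tau (σ', s') →
      OcnetSos T (σ, s) .tau (σ', s')
  | deliver {σ σ' : IP → S} {s s' : NetState LS IP} {i : IP} {d : DATA} :
      (∀ j ∉ netIps s, σ' j = σ j) → T (σ, s) (.deliver i d) (σ', s') →
      OcnetSos T (σ, s) (.deliver i d) (σ', s')
  | connect {σ σ' : IP → S} {s s' : NetState LS IP} {i i' : IP} :
      (∀ j ∉ netIps s, σ' j = σ j) → T (σ, s) (.connect i i') (σ', s') →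
      OcnetSos T (σ, s) (.connect i i') (σ', s')
  | disconnect {σ σ' : IP → S} {s s' : NetState LS IP} {i i' : IP} :
      (∀ j ∉ netIps s, σ' j = σ j) → T (σ, s) (.disconnect i i') (σ', s') →
      OcnetSos T (σ, s) (.disconnect i i') (σ', s')

/-- The closed open-network automaton. -/
def oclosed {LS : Type} (A : Automaton ((IP → S) × NetState LS IP) (NodeAction IP MSG DATA)) :
    Automaton ((IP → S) × NetState LS IP) (NodeAction IP MSG DATA) :=
  ⟨A.init, OcnetSos A.trans⟩

/-! ### The openproc locale -/

/-- The `openproc` locale: `sr` splits states of `np i` into a global and a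
local component, the initial states correspond, and `onp` simulates `np`. -/
structure Openproc {PS LS : Type} (np : IP → Automaton PS (SeqAction IP MSG DATA))
    (onp : IP → Automaton ((IP → S) × LS) (SeqAction IP MSG DATA))
    (sr : PS → S × LS) : Prop where
  init : ∀ (i : IP) (σ : IP → S) (ζ : LS),
      (∃ s ∈ (np i).init, (σ i, ζ) = sr s) →
      (∀ j, j ≠ i → ∃ s ∈ (np j).init, σ j = (sr s).1) →
      (σ, ζ) ∈ (onp i).init
  init_notempty : ∀ j, ((np j).init).Nonempty
  sim : ∀ (i : IP) (s s' : PS) (a : SeqAction IP MSG DATA) (σ σ' : IP → S),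
      (np i).trans s a s' → σ i = (sr s).1 → σ' i = (sr s').1 →
      (onp i).trans (σ, (sr s).2) a (σ', (sr s').2)

/-- An arbitrary initial global component for `np i`. -/
noncomputable def someinit {PS LS : Type} [Nonempty S]
    (np : IP → Automaton PS (SeqAction IP MSG DATA)) (sr : PS → S × LS) (i : IP) : S :=
  Classical.epsilon fun x => ∃ s ∈ (np i).init, x = (sr s).1

/-- The partial map from addresses to global components of node states. -/
def netlift {PS LS : Type} [DecidableEq IP] (sr : PS → S × LS) :
    NetState PS IP → IP → Option S
  | .node i s _ => fun j => if j = i then some (sr s).1 else none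
  | .subnet s t => fun j => (netlift sr s j).orElse (fun _ => netlift sr t j)

/-- The tree of local components of a network state. -/
def netliftl {PS LS : Type} (sr : PS → S × LS) : NetState PS IP → NetState LS IP
  | .node i s R => .node i (sr s).2 R
  | .subnet s t => .subnet (netliftl sr s) (netliftl sr t)

/-- The open state corresponding to a standard network state. -/
noncomputable def netgmap {PS LS : Type} [DecidableEq IP] [Nonempty S]
    (np : IP → Automaton PS (SeqAction IP MSG DATA)) (sr : PS → S × LS)
    (s : NetState PS IP) : (IP → S) × NetState LS IP :=
  ((fun j => (netlift sr s j).getD (someinit np sr j)), netliftl sr s)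



/-! ### The toy protocol -/

/-- Messages of the toy protocol. -/
inductive ToyMsg : Type where
  | newpkt (data dst : ℕ)
  | pkt (data src : ℕ)

/-- Data states of the toy protocol. -/
structure ToyState : Type where
  ip : ℕ
  no : ℕ
  num : ℕ
  sip : ℕ
  nhip : ℕ
  msg : ToyMsg

/-- The single process name of the toy protocol. -/
inductive ToyPN : Type where
  | PToy

abbrev ToySeqp : Type := Seqp ToyState ToyPN ℕ ℕ ToyMsg ℕ

/-- The `is_newpkt` guard: succeeds iff `msg ξ = newpkt d dst`, setting `num := d`. -/
def isNewpkt : ToyState → Set ToyState := fun ξ =>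
  {ξ' | ∃ d dst, ξ.msg = .newpkt d dst ∧ ξ' = { ξ with num := d }}

/-- The `is_pkt` guard: succeeds iff `msg ξ = pkt d src`, setting `num := d`, `sip := src`. -/
def isPkt : ToyState → Set ToyState := fun ξ =>
  {ξ' | ∃ d src, ξ.msg = .pkt d src ∧ ξ' = { ξ with num := d, sip := src }}

/-- `Toy()`: reset the local variables `msg`, `num` and `sip` to fixed
defaults and call `PToy`; `l` is the label of the resetting assignment. -/
def toyReset (l : ℕ) : ToySeqp :=
  .assign l (fun ξ => { ξ with msg := .newpkt 0 0, num := 0, sip := 0 }) (.call .PToy)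

/-- The specification `Γ_Toy` of the toy protocol. -/
def toySpec : ToyPN → ToySeqp := fun _ =>
  .receive 0 (fun m ξ => { ξ with msg := m }) <|
  .assign 1 (fun ξ => { ξ with nhip := ξ.ip }) <|
  .choice
    (.guard 2 isNewpkt <|
      .assign 3 (fun ξ => { ξ with no := max ξ.no ξ.num }) <|
      .bcast 4 (fun ξ => .pkt ξ.no ξ.ip) <| toyReset 5)
    (.guard 2 isPkt <|
      .choice
        (.guard 6 (fun ξ => if ξ.num ≥ ξ.no then {ξ} else ∅) <|
          .assign 7 (fun ξ => { ξ with no := ξ.num }) <|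
          .assign 8 (fun ξ => { ξ with nhip := ξ.sip }) <|
          .bcast 9 (fun ξ => .pkt ξ.no ξ.ip) <| toyReset 10)
        (.guard 6 (fun ξ => if ξ.num < ξ.no then {ξ} else ∅) <| toyReset 11))

/-- The initial data state of node `i`. -/
def toyInit (i : ℕ) : ToyState :=
  { ip := i, no := 0, num := 0, sip := 0, nhip := i, msg := .newpkt 0 0 }

instance : Nonempty ToyState := ⟨toyInit 0⟩

/-- The sequential toy-protocol automaton at address `i`. -/
def ptoy (i : ℕ) : Automaton (ToyState × ToySeqp) (SeqAction ℕ ToyMsg ℕ) :=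
  ⟨{(toyInit i, toySpec .PToy)}, fun s a s' => SeqpSos toySpec s a s'⟩

/-- The open sequential toy-protocol automaton at address `i`. -/
def optoy (i : ℕ) : Automaton ((ℕ → ToyState) × ToySeqp) (SeqAction ℕ ToyMsg ℕ) :=
  ⟨{x | x.1 i = toyInit i ∧ x.2 = toySpec .PToy}, fun s a s' => OseqpSos toySpec i s a s'⟩

/-- The `no` field never decreases. -/
def nosIncrease (ξ ξ' : ToyState) : Prop := ξ.no ≤ ξ'.no

/-- Incoming `pkt` messages reflect the state of the sender. -/
def msgNumOk (σ : ℕ → ToyState) : ToyMsg → Prop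
  | .pkt d src => d ≤ (σ src).no
  | .newpkt _ _ => True

/-- `sr` for the toy protocol composed with `qmsg`. -/
def srToy : (ToyState × ToySeqp) × List ToyMsg → ToyState × (ToySeqp × List ToyMsg) :=
  fun s => (s.1.1, (s.1.2, s.2))

/-- Lift a predicate on global states to standard toy network states. -/
def toyNetglobal (P : (ℕ → ToyState) → Prop)
    (s : NetState ((ToyState × ToySeqp) × List ToyMsg) ℕ) : Prop :=
  P (fun j => ((netlift srToy s) j).getD (toyInit j))


/-! A standard network state `s` is sent to `netgmap np sr s`: the global components
`fst ∘ sr` of its node states, assembled into one map `σ`, paired with the tree of local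
components. Because the addresses of a well-formed tree are disjoint, this `σ` agrees with
every node of `s` at once, and then the simulation condition of `openproc` lifts each node
step, hence each closed network step, to an `oclosed` step with the same action. Initial
states map to initial states, so the image of every reachable state is open-reachable
(with no environment steps at all) and the open invariant applies to it. -/

section Transfer

variable {PS LS : Type}

def Agrees (sr : PS → S × LS) (σ : IP → S) : NetState PS IP → Prop
  | .node i s _ => σ i = (sr s).1
  | .subnet s t => Agrees sr σ s ∧ Agrees sr σ t

def WfNetState : NetState PS IP → Prop
  | .node _ _ _ => True
  | .subnet s t => Disjoint (netIps s) (netIps t) ∧ WfNetState s ∧ WfNetState t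

theorem eqOn_compl_of_eqOn_compl_union {α β : Type} {f g : α → β} {s t : Set α}
    (h : Set.EqOn f g (s ∪ t)ᶜ) (ht : Set.EqOn f g t) : Set.EqOn f g sᶜ :=
  (h.union ht).mono fun j hs => (em (j ∈ t)).elim .inr fun ht' => .inl fun h' => h'.elim hs ht'

theorem Agrees.eqOn {sr : PS → S × LS} {σ σ' : IP → S} {s : NetState PS IP}
    (h : Agrees sr σ s) (h' : Agrees sr σ' s) : Set.EqOn σ' σ (netIps s) := by
  induction s with
  | node i st R => rintro j rfl; exact h'.trans h.symm
  | subnet s t ihs iht => exact (ihs h.1 h'.1).union (iht h.2 h'.2)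

theorem Agrees.congr {sr : PS → S × LS} {σ σ' : IP → S} {s : NetState PS IP}
    (h : Agrees sr σ s) (heq : Set.EqOn σ' σ (netIps s)) : Agrees sr σ' s := by
  induction s with
  | node i st R => exact (heq rfl).trans h
  | subnet s t ihs iht =>
    exact ⟨ihs h.1 (heq.mono Set.subset_union_left), iht h.2 (heq.mono Set.subset_union_right)⟩

theorem netIps_netliftl (sr : PS → S × LS) (s : NetState PS IP) :
    netIps (netliftl sr s) = netIps s := by
  induction s with
  | node i st R => rfl
  | subnet s t ihs iht => simp only [netliftl, netIps, ihs, iht]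

section Netlift

variable [DecidableEq IP] {sr : PS → S × LS}

theorem netlift_eq_none_iff {s : NetState PS IP} {j : IP} :
    netlift sr s j = none ↔ j ∉ netIps s := by
  induction s with
  | node i st R => simp [netlift, netIps]
  | subnet s t ihs iht =>
    cases hs : netlift sr s j <;> simp_all [netlift, netIps, Option.orElse]

theorem netlift_subnet_of_mem {s t : NetState PS IP} {j : IP} (h : j ∈ netIps s) :
    netlift sr (.subnet s t) j = netlift sr s j := by
  cases hs : netlift sr s j with
  | none => exact absurd (netlift_eq_none_iff.1 hs) (not_not.2 h)
  | some x => simp [netlift, hs, Option.orElse]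

theorem netlift_subnet_of_notMem {s t : NetState PS IP} {j : IP} (h : j ∉ netIps s) :
    netlift sr (.subnet s t) j = netlift sr t j := by
  simp [netlift, netlift_eq_none_iff.2 h, Option.orElse]

theorem agrees_netlift_getD {s : NetState PS IP} (hs : WfNetState s) (d : IP → S) :
    Agrees sr (fun j => (netlift sr s j).getD (d j)) s := by
  induction s with
  | node i st R => simp [Agrees, netlift]
  | subnet s t ihs iht =>
    obtain ⟨hd, hws, hwt⟩ := hs
    -- `netlift` reads the left subtree first, so the right one needs disjointness
    refine ⟨(ihs hws).congr fun j hj => ?_, (iht hwt).congr fun j hj => ?_⟩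
    · simp only [netlift_subnet_of_mem hj]
    · simp only [netlift_subnet_of_notMem (hd.notMem_of_mem_right hj)]

end Netlift

theorem PnetSos.exists_subnet
    {T₁ T₂ : NetState PS IP → NodeAction IP MSG DATA → NetState PS IP → Prop}
    {u u' : NetState PS IP} {a : NodeAction IP MSG DATA} (h : PnetSos T₁ T₂ u a u') :
    ∃ s t s' t', u = .subnet s t ∧ u' = .subnet s' t' ∧
      (s' = s ∨ ∃ b, T₁ s b s') ∧ (t' = t ∨ ∃ b, T₂ t b t') := by
  cases h <;> exact ⟨_, _, _, _, rfl, rfl, by tauto, by tauto⟩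

theorem CnetSos.exists_trans {NS : Type} {T : NS → NodeAction IP MSG DATA → NS → Prop}
    {s s' : NS} {a : NodeAction IP MSG DATA} (h : CnetSos T s a s') : ∃ b, T s b s' := by
  cases h <;> exact ⟨_, ‹_›⟩

section Pnet

variable {np : IP → Automaton PS (SeqAction IP MSG DATA)}

theorem netIps_of_pnet_init {n : NetTree IP} {s : NetState PS IP}
    (hs : s ∈ (pnet np n).init) : netIps s = netTreeIps n := by
  induction n generalizing s with
  | node i R => obtain ⟨_, _, rfl⟩ := hs; rfl
  | par t₁ t₂ ih₁ ih₂ =>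
    obtain ⟨s₁, s₂, hs₁, hs₂, rfl⟩ := hs
    simp only [netIps, netTreeIps, ih₁ hs₁, ih₂ hs₂]

theorem netIps_of_pnet_trans {n : NetTree IP} {s s' : NetState PS IP}
    {a : NodeAction IP MSG DATA} (htr : (pnet np n).trans s a s') : netIps s' = netIps s := by
  induction n generalizing s a s' with
  | node i R => cases htr <;> rfl
  | par t₁ t₂ ih₁ ih₂ =>
    obtain ⟨s₁, s₂, s₁', s₂', rfl, rfl, h₁, h₂⟩ := PnetSos.exists_subnet htr
    have e₁ : netIps s₁' = netIps s₁ := by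
      rcases h₁ with rfl | ⟨_, hb⟩ <;> [rfl; exact ih₁ hb]
    have e₂ : netIps s₂' = netIps s₂ := by
      rcases h₂ with rfl | ⟨_, hb⟩ <;> [rfl; exact ih₂ hb]
    simp only [netIps, e₁, e₂]

theorem wfNetState_of_pnet_init {n : NetTree IP} (hn : WfNetTree n) {s : NetState PS IP}
    (hs : s ∈ (pnet np n).init) : WfNetState s := by
  induction n generalizing s with
  | node i R => obtain ⟨_, _, rfl⟩ := hs; trivial
  | par t₁ t₂ ih₁ ih₂ =>
    obtain ⟨hd, hn₁, hn₂⟩ := hn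
    obtain ⟨s₁, s₂, hs₁, hs₂, rfl⟩ := hs
    refine ⟨?_, ih₁ hn₁ hs₁, ih₂ hn₂ hs₂⟩
    rw [netIps_of_pnet_init hs₁, netIps_of_pnet_init hs₂]
    exact Set.disjoint_iff_inter_eq_empty.2 hd

theorem WfNetState.of_pnet_trans {n : NetTree IP} {s s' : NetState PS IP}
    {a : NodeAction IP MSG DATA} (htr : (pnet np n).trans s a s') (hs : WfNetState s) :
    WfNetState s' := by
  induction n generalizing s a s' with
  | node i R => cases htr <;> trivial
  | par t₁ t₂ ih₁ ih₂ =>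
    obtain ⟨s₁, s₂, s₁', s₂', rfl, rfl, h₁, h₂⟩ := PnetSos.exists_subnet htr
    obtain ⟨hd, hs₁, hs₂⟩ := hs
    obtain ⟨e₁, hs₁'⟩ : netIps s₁' = netIps s₁ ∧ WfNetState s₁' := by
      rcases h₁ with rfl | ⟨_, hb⟩
      exacts [⟨rfl, hs₁⟩, ⟨netIps_of_pnet_trans hb, ih₁ hb hs₁⟩]
    obtain ⟨e₂, hs₂'⟩ : netIps s₂' = netIps s₂ ∧ WfNetState s₂' := by
      rcases h₂ with rfl | ⟨_, hb⟩
      exacts [⟨rfl, hs₂⟩, ⟨netIps_of_pnet_trans hb, ih₂ hb hs₂⟩]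
    exact ⟨e₁ ▸ e₂ ▸ hd, hs₁', hs₂'⟩

theorem netIps_of_closed_pnet_trans {n : NetTree IP} {s s' : NetState PS IP}
    {a : NodeAction IP MSG DATA} (htr : (closed (pnet np n)).trans s a s') :
    netIps s' = netIps s :=
  let ⟨_, hb⟩ := CnetSos.exists_trans htr
  netIps_of_pnet_trans hb

theorem wfNetState_of_reachable {n : NetTree IP} (hn : WfNetTree n)
    {I : NodeAction IP MSG DATA → Prop}
    {s : NetState PS IP} (hs : Reachable (closed (pnet np n)) I s) : WfNetState s := by
  induction hs with
  | init h => exact wfNetState_of_pnet_init hn h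
  | step _ htr _ ih =>
    obtain ⟨_, hb⟩ := CnetSos.exists_trans htr
    exact ih.of_pnet_trans hb

end Pnet

theorem someinit_spec [Nonempty S] {np : IP → Automaton PS (SeqAction IP MSG DATA)}
    {sr : PS → S × LS} {j : IP} (h : (np j).init.Nonempty) :
    ∃ s₀ ∈ (np j).init, someinit np sr j = (sr s₀).1 :=
  Classical.epsilon_spec (p := fun x => ∃ s₀ ∈ (np j).init, x = (sr s₀).1)
    ⟨_, h.some, h.some_mem, rfl⟩

section Netgmap

variable [DecidableEq IP] {np : IP → Automaton PS (SeqAction IP MSG DATA)} {sr : PS → S × LS}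

theorem exists_init_of_netlift_eq_some {n : NetTree IP} {s : NetState PS IP} {j : IP} {x : S}
    (hs : s ∈ (pnet np n).init) (h : netlift sr s j = some x) :
    ∃ s₀ ∈ (np j).init, x = (sr s₀).1 := by
  induction n generalizing s with
  | node i R =>
    obtain ⟨s₀, hs₀, rfl⟩ := hs
    simp only [netlift] at h
    split_ifs at h with hj
    subst hj
    exact ⟨s₀, hs₀, (Option.some.inj h).symm⟩
  | par t₁ t₂ ih₁ ih₂ =>
    obtain ⟨s₁, s₂, hs₁, hs₂, rfl⟩ := hs
    by_cases hj : j ∈ netIps s₁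
    · exact ih₁ hs₁ (netlift_subnet_of_mem hj ▸ h)
    · exact ih₂ hs₂ (netlift_subnet_of_notMem hj ▸ h)

theorem netgmap_fst_of_pnet_init [Nonempty S] (hne : ∀ j, (np j).init.Nonempty)
    {n : NetTree IP} {s : NetState PS IP} (hs : s ∈ (pnet np n).init) (j : IP) :
    ∃ s₀ ∈ (np j).init, (netgmap np sr s).1 j = (sr s₀).1 := by
  cases h : netlift sr s j with
  | none => simpa [netgmap, h] using someinit_spec (sr := sr) (hne j)
  | some x => simpa [netgmap, h] using exists_init_of_netlift_eq_some hs h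

theorem netgmap_fst_eqOn_compl [Nonempty S] {s s' : NetState PS IP}
    (h : netIps s' = netIps s) :
    Set.EqOn (netgmap np sr s').1 (netgmap np sr s).1 (netIps s)ᶜ := fun j hj => by
  simp [netgmap, netlift_eq_none_iff.2 hj, netlift_eq_none_iff.2 (h ▸ hj : j ∉ netIps s')]

end Netgmap

section Simulation

variable {np : IP → Automaton PS (SeqAction IP MSG DATA)}
  {onp : IP → Automaton ((IP → S) × LS) (SeqAction IP MSG DATA)} {sr : PS → S × LS}

theorem opnet_init_of_pnet_init (hop : Openproc np onp sr) {n : NetTree IP}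
    {s : NetState PS IP} (hs : s ∈ (pnet np n).init) {σ : IP → S}
    (hσ : ∀ j, ∃ s₀ ∈ (np j).init, σ j = (sr s₀).1) (h : Agrees sr σ s) :
    (σ, netliftl sr s) ∈ (opnet onp n).init := by
  induction n generalizing s with
  | node i R =>
    obtain ⟨s₀, hs₀, rfl⟩ := hs
    exact ⟨σ, _, hop.init i σ _ ⟨s₀, hs₀, Prod.ext h rfl⟩ fun j _ => hσ j, rfl⟩
  | par t₁ t₂ ih₁ ih₂ =>
    obtain ⟨s₁, s₂, hs₁, hs₂, rfl⟩ := hs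
    exact ⟨σ, _, _, ih₁ hs₁ h.1, ih₂ hs₂ h.2, rfl⟩

theorem onode_trans_of_node_trans (hop : Openproc np onp sr) {i : IP} {R : Set IP}
    {s s' : NetState PS IP} {a : NodeAction IP MSG DATA} (htr : (node i (np i) R).trans s a s')
    {σ σ' : IP → S} (h : Agrees sr σ s) (h' : Agrees sr σ' s')
    (hloc : a.isLocal → Set.EqOn σ' σ (netIps s)ᶜ) :
    (onode i (onp i) R).trans (σ, netliftl sr s) a (σ', netliftl sr s') := by
  have sim := fun {st st' b} (hA : (np i).trans st b st') (h : σ i = (sr st).1)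
    (h' : σ' i = (sr st').1) => hop.sim i st st' b σ σ' hA h h'
  cases htr with
  | bcast hA => exact .bcast (sim hA h h')
  | gcast hA => exact .gcast (sim hA h h')
  | ucast hd hA => exact .ucast hd (sim hA h h')
  | notucast hd hA => exact .notucast hd (sim hA h h') fun _ hj => hloc trivial hj
  | deliver hA => exact .deliver (sim hA h h') fun _ hj => hloc trivial hj
  | tau hA => exact .tau (sim hA h h') fun _ hj => hloc trivial hj
  | receive hA => exact .receive (sim hA h h')
  | not_arrive => exact .not_arrive (h'.trans h.symm)
  | connect_this => exact .connect_this (h'.trans h.symm)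
  | connect_that => exact .connect_that (h'.trans h.symm)
  | connect_other hne hne' => exact .connect_other hne hne' (h'.trans h.symm)
  | disconnect_this => exact .disconnect_this (h'.trans h.symm)
  | disconnect_that => exact .disconnect_that (h'.trans h.symm)
  | disconnect_other hne hne' => exact .disconnect_other hne hne' (h'.trans h.symm)

theorem opnet_trans_of_pnet_trans (hop : Openproc np onp sr) {n : NetTree IP}
    {s s' : NetState PS IP} {a : NodeAction IP MSG DATA} (htr : (pnet np n).trans s a s')
    {σ σ' : IP → S} (h : Agrees sr σ s) (h' : Agrees sr σ' s')
    (hloc : a.isLocal → Set.EqOn σ' σ (netIps s)ᶜ) :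
    (opnet onp n).trans (σ, netliftl sr s) a (σ', netliftl sr s') := by
  induction n generalizing s a s' with
  | node i R => exact onode_trans_of_node_trans hop htr h h' hloc
  | par t₁ t₂ ih₁ ih₂ =>
    cases htr with
    | cast_left hA hB hH hK =>
      exact .cast_left (ih₁ hA h.1 h'.1 nofun) (ih₂ hB h.2 h'.2 nofun) hH hK
    | cast_right hA hB hH hK =>
      exact .cast_right (ih₁ hA h.1 h'.1 nofun) (ih₂ hB h.2 h'.2 nofun) hH hK
    | arrive hA hB => exact .arrive (ih₁ hA h.1 h'.1 nofun) (ih₂ hB h.2 h'.2 nofun)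
    | connect hA hB => exact .connect (ih₁ hA h.1 h'.1 nofun) (ih₂ hB h.2 h'.2 nofun)
    | disconnect hA hB => exact .disconnect (ih₁ hA h.1 h'.1 nofun) (ih₂ hB h.2 h'.2 nofun)
    | tau_left hA =>
      have hframe := h.2.eqOn h'.2
      refine .tau_left (ih₁ hA h.1 h'.1 fun _ => ?_) ((netIps_netliftl sr _).symm ▸ hframe)
      exact eqOn_compl_of_eqOn_compl_union (hloc trivial) hframe
    | deliver_left hA =>
      have hframe := h.2.eqOn h'.2
      refine .deliver_left (ih₁ hA h.1 h'.1 fun _ => ?_) ((netIps_netliftl sr _).symm ▸ hframe)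
      exact eqOn_compl_of_eqOn_compl_union (hloc trivial) hframe
    | tau_right hB =>
      have hframe := h.1.eqOn h'.1
      refine .tau_right (ih₂ hB h.2 h'.2 fun _ => ?_) ((netIps_netliftl sr _).symm ▸ hframe)
      exact eqOn_compl_of_eqOn_compl_union (Set.union_comm _ _ ▸ hloc trivial) hframe
    | deliver_right hB =>
      have hframe := h.1.eqOn h'.1
      refine .deliver_right (ih₂ hB h.2 h'.2 fun _ => ?_) ((netIps_netliftl sr _).symm ▸ hframe)
      exact eqOn_compl_of_eqOn_compl_union (Set.union_comm _ _ ▸ hloc trivial) hframe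

theorem oclosed_trans_of_closed_trans (hop : Openproc np onp sr) {n : NetTree IP}
    {s s' : NetState PS IP} {a : NodeAction IP MSG DATA} (htr : (closed (pnet np n)).trans s a s')
    {σ σ' : IP → S} (h : Agrees sr σ s) (h' : Agrees sr σ' s')
    (hout : Set.EqOn σ' σ (netIps s)ᶜ) :
    (oclosed (opnet onp n)).trans (σ, netliftl sr s) a (σ', netliftl sr s') := by
  have hout' : ∀ j ∉ netIps (netliftl sr s), σ' j = σ j := netIps_netliftl sr s ▸ hout
  cases htr with
  | cast hb => exact .cast hout' (opnet_trans_of_pnet_trans hop hb h h' nofun)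
  | tau hb => exact .tau hout' (opnet_trans_of_pnet_trans hop hb h h' fun _ => hout)
  | deliver hb => exact .deliver hout' (opnet_trans_of_pnet_trans hop hb h h' fun _ => hout)
  | connect hb => exact .connect hout' (opnet_trans_of_pnet_trans hop hb h h' nofun)
  | disconnect hb => exact .disconnect hout' (opnet_trans_of_pnet_trans hop hb h h' nofun)

end Simulation

end Transfer

/-- transfer of invariants (corollary). -/
theorem transfer_invariant {S PS LS IP MSG DATA : Type} [DecidableEq IP] [Nonempty S]
    (np : IP → Automaton PS (SeqAction IP MSG DATA))
    (onp : IP → Automaton ((IP → S) × LS) (SeqAction IP MSG DATA))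
    (sr : PS → S × LS) (hop : Openproc np onp sr)
    (n : NetTree IP) (hwf : WfNetTree n)
    (P : (IP → S) × NetState LS IP → Prop)
    (hoinv : Oinvariant (oclosed (opnet onp n)) (fun _ _ _ => True)
        (other (fun _ _ => True) (netTreeIps n)) P) :
    Invariant (closed (pnet np n)) (fun _ => True)
      (fun s => P (netgmap np sr s)) := by
  have agrees : ∀ {s}, Reachable (closed (pnet np n)) (fun _ => True) s →
      Agrees sr (netgmap np sr s).1 s :=
    fun hs => agrees_netlift_getD (wfNetState_of_reachable hwf hs) _
  intro s hs
  apply hoinv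
  induction hs with
  | init hs₀ =>
    exact .init (opnet_init_of_pnet_init hop hs₀
      (netgmap_fst_of_pnet_init hop.init_notempty hs₀) (agrees (.init hs₀)))
  | step hr htr hI ih =>
    exact .step ih (oclosed_trans_of_closed_trans hop htr (agrees hr) (agrees (.step hr htr hI))
      (netgmap_fst_eqOn_compl (netIps_of_closed_pnet_trans htr))) trivial

end AWN
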